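/- arXiv:2006.00766 — 7 statements merged into one kernel-verified Lean document; each statement's English description precedes it below -/
import Mathlib

section
/- The amplitude amplification factor AAF₂(ν̃₂) = 1 + √(4 - 2ν̃₂²) + 2√(1 - 2ν̃₂²) of SFB₂ is strictly decreasing on (0, √(1/2)), tends to 5 as ν̃₂ → 0⁺, and tends to 1 + √3 as ν̃₂ → √(1/2)⁻. -/
open Real Set

lemma strictAntiOn_sqrt_sub_mul_sq {a c : ℝ} (hc : 0 < c) :
    StrictAntiOn (fun ν => √(a - c * ν ^ 2)) (Icc 0 √(a / c)) := by
  intro x hx y hy hxy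
  have hy2 : c * y ^ 2 ≤ a := by
    rw [← le_div_iff₀' hc, ← Real.le_sqrt' (hx.1.trans_lt hxy)]
    exact hy.2
  have hxy2 : x ^ 2 < y ^ 2 := pow_lt_pow_left₀ hxy hx.1 two_ne_zero
  exact Real.sqrt_lt_sqrt (by linarith) (by nlinarith)

theorem stmt_6 (AAF₂ : ℝ → ℝ)
    (h₂ : ∀ ν : ℝ, AAF₂ ν = 1 + Real.sqrt (4 - 2 * ν ^ 2) + 2 * Real.sqrt (1 - 2 * ν ^ 2)) :
    StrictAntiOn AAF₂ (Set.Ioo 0 (Real.sqrt (1 / 2))) ∧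
    Filter.Tendsto AAF₂ (nhdsWithin 0 (Set.Ioi 0)) (nhds 5) ∧
    Filter.Tendsto AAF₂ (nhdsWithin (Real.sqrt (1 / 2)) (Set.Iio (Real.sqrt (1 / 2))))
      (nhds (1 + Real.sqrt 3)) := by
  have hcont : Continuous AAF₂ := by
    rw [funext h₂]
    fun_prop
  have hIcc : Icc 0 √(1 / 2) ⊆ Icc 0 √(4 / 2) :=
    Icc_subset_Icc_right (Real.sqrt_le_sqrt (by norm_num))
  refine ⟨?_, ?_, ?_⟩
  · intro x hx y hy hxy
    have hx' := Ioo_subset_Icc_self hx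
    have hy' := Ioo_subset_Icc_self hy
    have h4 := strictAntiOn_sqrt_sub_mul_sq (a := 4) two_pos (hIcc hx') (hIcc hy') hxy
    have h1 := strictAntiOn_sqrt_sub_mul_sq (a := 1) two_pos hx' hy' hxy
    simp only at h4 h1
    rw [h₂, h₂]
    linarith
  · have h0 : AAF₂ 0 = 5 := by
      rw [h₂]
      norm_num
    exact h0 ▸ hcont.continuousWithinAt.tendsto
  · have h0 : AAF₂ √(1 / 2) = 1 + √3 := by
      rw [h₂, Real.sq_sqrt (by norm_num)]
      norm_num
    exact h0 ▸ hcont.continuousWithinAt.tendsto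
end

section
/- Let β, γ, r₀ > 0 and 0 < ν̃ < √2 with ν = r₀√(γ/β)·ν̃. Set P(φ) = ν̃²Q(φ)/cos φ and Q(φ)² = 2cos²φ/(2cos²φ - ν̃²) for φ with 2cos²φ > ν̃². Then G(φ,τ) = P(φ)/(Q(φ) - cos(ντ)) satisfies β∂τ²G + λG + γr₀²G(G - cos φ)(G - 2cos φ) = 0 with λ = γr₀²(ν̃² - 2cos²φ). -/
/-!
With `u = (Q - cos (ν τ))⁻¹` one has `u' = -ν sin (ν τ) u²`; eliminating `sin² = 1 - cos²` and
`cos (ν τ) = Q - u⁻¹` turns `u` into a solution of the cubic oscillator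
`u'' = ν² (2 (1 - Q²) u³ + 3 Q u² - u)`. For `G = P u` and `β ν² = γ r₀² ν'²`, the equation for `G`
then reduces to matching the quadratic and cubic coefficients, which is exactly
`P cos φ = ν'² Q` and `Q² (2 cos² φ - ν'²) = 2 cos² φ`.
-/

open Real Filter Topology

theorem hasDerivAt_inv_sub_cos {b c t : ℝ} (h : b - cos (c * t) ≠ 0) :
    HasDerivAt (fun s => (b - cos (c * s))⁻¹) (-(c * sin (c * t)) * (b - cos (c * t))⁻¹ ^ 2) t := by
  have hcos : HasDerivAt (fun s => b - cos (c * s)) (c * sin (c * t)) t := by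
    simpa [mul_comm] using ((hasDerivAt_mul_const c).cos.const_sub b : HasDerivAt _ _ t)
  exact (hcos.fun_inv h).congr_deriv (by rw [inv_pow, div_eq_mul_inv])

theorem deriv_deriv_inv_sub_cos {b c τ : ℝ} (h : b - cos (c * τ) ≠ 0) :
    deriv (deriv fun t => (b - cos (c * t))⁻¹) τ =
      c ^ 2 * (2 * (1 - b ^ 2) * (b - cos (c * τ))⁻¹ ^ 3 + 3 * b * (b - cos (c * τ))⁻¹ ^ 2
        - (b - cos (c * τ))⁻¹) := by
  have hne : ∀ᶠ t in 𝓝 τ, b - cos (c * t) ≠ 0 :=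
    (by fun_prop : Continuous fun t => b - cos (c * t)).continuousAt.eventually_ne h
  have hderiv : deriv (fun t => (b - cos (c * t))⁻¹) =ᶠ[𝓝 τ]
      fun t => -(c * sin (c * t)) * (b - cos (c * t))⁻¹ ^ 2 :=
    hne.mono fun t ht => (hasDerivAt_inv_sub_cos ht).deriv
  have hsin : HasDerivAt (fun t => -(c * sin (c * t))) (-(c * (c * cos (c * τ)))) τ := by
    simpa [mul_comm] using ((hasDerivAt_mul_const c).sin.const_mul c).fun_neg (x := τ)
  rw [hderiv.deriv_eq, (hsin.fun_mul ((hasDerivAt_inv_sub_cos h).fun_pow 2)).deriv]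
  set u := (b - cos (c * τ))⁻¹
  have hu : (b - cos (c * τ)) * u = 1 := mul_inv_cancel₀ h
  linear_combination (c ^ 2 * (u + 4 * b * u ^ 2 - 2 * u * ((b - cos (c * τ)) * u + 1))) * hu
    + (2 * c ^ 2 * u ^ 3) * sin_sq_add_cos_sq (c * τ)

theorem deriv_deriv_const_div_sub_cos (a : ℝ) {b c τ : ℝ} (h : b - cos (c * τ) ≠ 0) :
    deriv (deriv fun t => a / (b - cos (c * t))) τ =
      a * (c ^ 2 * (2 * (1 - b ^ 2) * (b - cos (c * τ))⁻¹ ^ 3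
        + 3 * b * (b - cos (c * τ))⁻¹ ^ 2 - (b - cos (c * τ))⁻¹)) := by
  simp only [div_eq_mul_inv, deriv_const_mul_field']
  exact congrArg (a * ·) (deriv_deriv_inv_sub_cos h)

theorem stmt_10_general (β γ r₀ ν' φ : ℝ) (hβ : 0 < β) (hγ : 0 < γ)
    (hφ : ν' ^ 2 < 2 * Real.cos φ ^ 2)
    (ν P Q lam : ℝ)
    (hνdef : ν = r₀ * Real.sqrt (γ / β) * ν')
    (hQ : Q ^ 2 = 2 * Real.cos φ ^ 2 / (2 * Real.cos φ ^ 2 - ν' ^ 2))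
    (hP : P = ν' ^ 2 * Q / Real.cos φ)
    (hlam : lam = γ * r₀ ^ 2 * (ν' ^ 2 - 2 * Real.cos φ ^ 2))
    (τ : ℝ) (hden : Q - Real.cos (ν * τ) ≠ 0) :
    β * deriv (deriv (fun t => P / (Q - Real.cos (ν * t)))) τ +
        lam * (P / (Q - Real.cos (ν * τ))) +
        γ * r₀ ^ 2 * (P / (Q - Real.cos (ν * τ))) *
          (P / (Q - Real.cos (ν * τ)) - Real.cos φ) *
          (P / (Q - Real.cos (ν * τ)) - 2 * Real.cos φ) = 0 := by
  have hc : Real.cos φ ≠ 0 := by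
    rintro hc
    nlinarith [sq_nonneg ν']
  have hβν : β * ν ^ 2 = γ * r₀ ^ 2 * ν' ^ 2 := by
    rw [hνdef, mul_pow, mul_pow, Real.sq_sqrt (div_pos hγ hβ).le]
    field_simp
  have hQ' : Q ^ 2 * (2 * Real.cos φ ^ 2 - ν' ^ 2) = 2 * Real.cos φ ^ 2 := by
    rw [hQ, div_mul_cancel₀ _ (sub_pos.mpr hφ).ne']
  have hPc : P * Real.cos φ = ν' ^ 2 * Q := by
    rw [hP, div_mul_cancel₀ _ hc]
  rw [deriv_deriv_const_div_sub_cos P hden, div_eq_mul_inv, hlam]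
  set u := (Q - Real.cos (ν * τ))⁻¹
  -- multiply by `cos φ ^ 2` so that `P` enters only through `P * cos φ = ν' ^ 2 * Q`
  refine (mul_eq_zero.mp (?_ : Real.cos φ ^ 2 * _ = 0)).resolve_left (pow_ne_zero 2 hc)
  linear_combination
    (Real.cos φ ^ 2 * P * (2 * (1 - Q ^ 2) * u ^ 3 + 3 * Q * u ^ 2 - u)) * hβν
    - (γ * r₀ ^ 2 * P * u * ν' ^ 2 * u ^ 2) * hQ'
    + (γ * r₀ ^ 2 * P * u * (u ^ 2 * (P * Real.cos φ + ν' ^ 2 * Q) - 3 * Real.cos φ ^ 2 * u)) * hPc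

theorem stmt_10 (β γ r₀ ν' φ : ℝ) (hβ : 0 < β) (hγ : 0 < γ) (hr : 0 < r₀)
    (hν : 0 < ν') (hν2 : ν' < Real.sqrt 2)
    (hφ : ν' ^ 2 < 2 * Real.cos φ ^ 2)
    (ν P Q lam : ℝ)
    (hνdef : ν = r₀ * Real.sqrt (γ / β) * ν')
    (hQ : Q ^ 2 = 2 * Real.cos φ ^ 2 / (2 * Real.cos φ ^ 2 - ν' ^ 2))
    (hP : P = ν' ^ 2 * Q / Real.cos φ)
    (hlam : lam = γ * r₀ ^ 2 * (ν' ^ 2 - 2 * Real.cos φ ^ 2))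
    (τ : ℝ) (hden : Q - Real.cos (ν * τ) ≠ 0) :
    β * deriv (deriv (fun t => P / (Q - Real.cos (ν * t)))) τ +
        lam * (P / (Q - Real.cos (ν * τ))) +
        γ * r₀ ^ 2 * (P / (Q - Real.cos (ν * τ))) *
          (P / (Q - Real.cos (ν * τ)) - Real.cos φ) *
          (P / (Q - Real.cos (ν * τ)) - 2 * Real.cos φ) = 0 :=
  stmt_10_general β γ r₀ ν' φ hβ hγ hφ ν P Q lam hνdef hQ hP hlam τ hden
end

section
/- Suppose φ: ℝ → ℝ satisfies tan φ(ξ) = -(σ̃/ν̃²)·tanh(σξ) where σ̃ = ν̃√(2 - ν̃²), σ = γr₀²σ̃, with γ, r₀ > 0 and 0 < ν̃ < √2, and φ takes values in (-π/2, π/2). Then φ satisfies the ODE dφ/dξ = γr₀²(ν̃² - 2cos²φ(ξ)). -/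
/-!
On `(-π/2, π/2)` the relation `tan φ = f` inverts to `φ = arctan ∘ f`, so `φ' = f' cos² φ`.
For `f ξ = c tanh(σ ξ)` with `c = -σ̃/ν̃²` this is `c σ (1 - tanh²) cos² φ`, and the identities
`c σ̃ = ν̃² - 2` and `ν̃² c² = 2 - ν̃²`, together with `cos² φ (1 + c² tanh²) = 1`, turn it into
`γ r₀² (ν̃² - 2 cos² φ)`.
-/

open Real Set

theorem Real.hasDerivAt_tanh (x : ℝ) : HasDerivAt tanh (1 - tanh x ^ 2) x := by
  have h := (hasDerivAt_sinh x).div (hasDerivAt_cosh x) (cosh_pos x).ne'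
  rw [show sinh / cosh = tanh from funext fun y => (tanh_eq_sinh_div_cosh y).symm] at h
  refine h.congr_deriv ?_
  rw [tanh_eq_sinh_div_cosh]
  field_simp

theorem eq_arctan_comp_of_tan_eq {φ f : ℝ → ℝ} (h : ∀ x, tan (φ x) = f x)
    (hrange : ∀ x, φ x ∈ Ioo (-(π / 2)) (π / 2)) : φ = arctan ∘ f :=
  funext fun x => by rw [Function.comp_apply, ← h x, arctan_tan (hrange x).1 (hrange x).2]

theorem hasDerivAt_of_tan_eq {φ f : ℝ → ℝ} {f' x : ℝ} (h : ∀ x, tan (φ x) = f x)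
    (hrange : ∀ x, φ x ∈ Ioo (-(π / 2)) (π / 2)) (hf : HasDerivAt f f' x) :
    HasDerivAt φ (f' * cos (φ x) ^ 2) x := by
  have hφ := eq_arctan_comp_of_tan_eq h hrange
  have hcos : cos (φ x) ^ 2 = 1 / (1 + f x ^ 2) := by
    rw [hφ, Function.comp_apply, cos_sq_arctan]
  rw [hcos, hφ, mul_comm]
  exact (hasDerivAt_arctan (f x)).comp x hf

theorem stmt_11_general (γ r₀ ν' : ℝ)
    (hν : 0 < ν') (hν2 : ν' < Real.sqrt 2)
    (σ' σ : ℝ) (hσ' : σ' = ν' * Real.sqrt (2 - ν' ^ 2)) (hσ : σ = γ * r₀ ^ 2 * σ')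
    (φ : ℝ → ℝ)
    (hφ : ∀ ξ, Real.tan (φ ξ) = -(σ' / ν' ^ 2) * Real.tanh (σ * ξ))
    (hrange : ∀ ξ, φ ξ ∈ Set.Ioo (-(Real.pi / 2)) (Real.pi / 2)) :
    ∀ ξ, HasDerivAt φ (γ * r₀ ^ 2 * (ν' ^ 2 - 2 * Real.cos (φ ξ) ^ 2)) ξ := by
  intro ξ
  have hσ'_sq : σ' ^ 2 = ν' ^ 2 * (2 - ν' ^ 2) := by
    have : ν' ^ 2 < 2 := by simpa [abs_of_pos hν] using sq_lt_sq' (by linarith) hν2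
    rw [hσ', mul_pow, sq_sqrt (by linarith)]
  have hcσ' : -(σ' / ν' ^ 2) * σ' = ν' ^ 2 - 2 := by
    field_simp
    linear_combination -hσ'_sq
  have hc_sq : ν' ^ 2 * (-(σ' / ν' ^ 2)) ^ 2 = 2 - ν' ^ 2 := by
    field_simp
    linear_combination hσ'_sq
  set c := -(σ' / ν' ^ 2)
  set t := tanh (σ * ξ)
  have hcos : cos (φ ξ) ^ 2 * (1 + (c * t) ^ 2) = 1 := by
    rw [← inv_one_add_tan_sq (cos_pos_of_mem_Ioo (hrange ξ)).ne', hφ ξ]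
    exact inv_mul_cancel₀ (by positivity)
  have hf : HasDerivAt (fun ξ => c * tanh (σ * ξ)) (c * ((1 - t ^ 2) * σ)) ξ := by
    simpa using (((hasDerivAt_tanh (σ * ξ)).comp ξ ((hasDerivAt_id ξ).const_mul σ)).const_mul c)
  refine (hasDerivAt_of_tan_eq hφ hrange hf).congr_deriv ?_
  rw [hσ]
  linear_combination γ * r₀ ^ 2 * ((1 - t ^ 2) * cos (φ ξ) ^ 2 * hcσ'
    - cos (φ ξ) ^ 2 * t ^ 2 * hc_sq + ν' ^ 2 * hcos)

theorem stmt_11 (γ r₀ ν' : ℝ) (hγ : 0 < γ) (hr : 0 < r₀)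
    (hν : 0 < ν') (hν2 : ν' < Real.sqrt 2)
    (σ' σ : ℝ) (hσ' : σ' = ν' * Real.sqrt (2 - ν' ^ 2)) (hσ : σ = γ * r₀ ^ 2 * σ')
    (φ : ℝ → ℝ)
    (hφ : ∀ ξ, Real.tan (φ ξ) = -(σ' / ν' ^ 2) * Real.tanh (σ * ξ))
    (hrange : ∀ ξ, φ ξ ∈ Set.Ioo (-(Real.pi / 2)) (Real.pi / 2)) :
    ∀ ξ, HasDerivAt φ (γ * r₀ ^ 2 * (ν' ^ 2 - 2 * Real.cos (φ ξ) ^ 2)) ξ :=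
  stmt_11_general γ r₀ ν' hν hν2 σ' σ hσ' hσ φ hφ hrange
end

section
/- For 0 < ν̃ < √2, the real-valued SFB amplitude satisfies: the minimum over τ of |A(ξ,τ)|/r₀ at the extreme position ξ = 0 vanishes if and only if 0 < ν̃ ≤ √(3/2); specifically the envelope vanishes at ξ = 0 at times τ with cos(ντ) = 2(1 - ν̃²)/√(4 - 2ν̃²), and this equation has a real solution τ if and only if 0 < ν̃ ≤ √(3/2). -/
theorem stmt_12 (β γ r₀ ν' : ℝ) (hβ : 0 < β) (hγ : 0 < γ) (hr : 0 < r₀)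
    (hν : 0 < ν') (hν2 : ν' < Real.sqrt 2)
    (σ' σ ν : ℝ) (hσ' : σ' = ν' * Real.sqrt (2 - ν' ^ 2)) (hσ : σ = γ * r₀ ^ 2 * σ')
    (hνdef : ν = r₀ * Real.sqrt (γ / β) * ν')
    (A : ℝ → ℝ → ℂ)
    (hA : ∀ ξ τ, A ξ τ =
      (r₀ : ℂ) * Complex.exp (-Complex.I * ((γ * r₀ ^ 2 * ξ : ℝ) : ℂ)) *
        ((((ν' ^ 2 * Real.cosh (σ * ξ) : ℝ) : ℂ) -
            Complex.I * ((σ' * Real.sinh (σ * ξ) : ℝ) : ℂ)) /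
          (((Real.cosh (σ * ξ) - Real.sqrt (1 - ν' ^ 2 / 2) * Real.cos (ν * τ) : ℝ) : ℂ)) - 1)) :
    ((∃ τ : ℝ, A 0 τ = 0) ↔ ν' ≤ Real.sqrt (3 / 2)) ∧
    (∀ τ : ℝ, Real.cos (ν * τ) = 2 * (1 - ν' ^ 2) / Real.sqrt (4 - 2 * ν' ^ 2) →
      A 0 τ = 0) ∧
    ((∃ τ : ℝ, Real.cos (ν * τ) = 2 * (1 - ν' ^ 2) / Real.sqrt (4 - 2 * ν' ^ 2)) ↔
      ν' ≤ Real.sqrt (3 / 2)) := by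
  have hx2 : ν' ^ 2 < 2 := by
    have h := pow_lt_pow_left₀ hν2 hν.le (n := 2) (by norm_num)
    rwa [Real.sq_sqrt (by norm_num : (0:ℝ) ≤ 2)] at h
  set s := Real.sqrt (1 - ν' ^ 2 / 2) with hsdef
  have hs2 : s ^ 2 = 1 - ν' ^ 2 / 2 := Real.sq_sqrt (by linarith)
  have hs : 0 < s := Real.sqrt_pos.mpr (by linarith)
  have h4 : Real.sqrt (4 - 2 * ν' ^ 2) = 2 * s := by
    have h42 : (4 : ℝ) - 2 * ν' ^ 2 = 2 ^ 2 * (1 - ν' ^ 2 / 2) := by ring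
    rw [h42, Real.sqrt_mul (sq_nonneg 2), Real.sqrt_sq (by norm_num : (0:ℝ) ≤ 2)]
  have hc : 2 * (1 - ν' ^ 2) / Real.sqrt (4 - 2 * ν' ^ 2) = (1 - ν' ^ 2) / s := by
    rw [h4]; field_simp
  have hνne : ν ≠ 0 := by
    have hsb : 0 < Real.sqrt (γ / β) := Real.sqrt_pos.mpr (by positivity)
    rw [hνdef]; positivity
  have hν'sq : 0 < ν' ^ 2 := by positivity
  -- key equivalence
  have hkey : ∀ τ : ℝ, A 0 τ = 0 ↔ Real.cos (ν * τ) = (1 - ν' ^ 2) / s := by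
    intro τ
    have hA0 : A 0 τ = (r₀ : ℂ) *
        (((ν' ^ 2 : ℝ) : ℂ) / (((1 - s * Real.cos (ν * τ) : ℝ) : ℂ)) - 1) := by
      rw [hA]; simp [Real.cosh_zero, Real.sinh_zero]
    rw [hA0]
    have hrne : (r₀ : ℂ) ≠ 0 := by exact_mod_cast hr.ne'
    rw [mul_eq_zero, or_iff_right hrne, sub_eq_zero]
    by_cases hd : (1 : ℝ) - s * Real.cos (ν * τ) = 0
    · constructor
      · intro h
        rw [hd] at h
        simp at h
      · intro h
        exfalso
        have h1 : s * Real.cos (ν * τ) = 1 := by linarith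
        rw [h, ← mul_div_assoc, mul_div_cancel_left₀ _ hs.ne'] at h1
        nlinarith
    · have hdC : (((1 - s * Real.cos (ν * τ) : ℝ) : ℂ)) ≠ 0 := by exact_mod_cast hd
      rw [div_eq_one_iff_eq hdC]
      constructor
      · intro h
        have h' : (ν' ^ 2 : ℝ) = 1 - s * Real.cos (ν * τ) := by exact_mod_cast h
        rw [eq_div_iff hs.ne']
        linear_combination h'
      · intro h
        have h' : (ν' ^ 2 : ℝ) = 1 - s * Real.cos (ν * τ) := by
          rw [h, ← mul_div_assoc, mul_div_cancel_left₀ _ hs.ne']; ring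
        exact_mod_cast h'
  have hbound : (∃ τ : ℝ, Real.cos (ν * τ) = (1 - ν' ^ 2) / s) ↔
      ν' ≤ Real.sqrt (3 / 2) := by
    constructor
    · rintro ⟨τ, hτ⟩
      have h1 : -1 ≤ (1 - ν' ^ 2) / s := hτ ▸ Real.neg_one_le_cos (ν * τ)
      have h2 : (1 - ν' ^ 2) / s ≤ 1 := hτ ▸ Real.cos_le_one (ν * τ)
      have h3 : |1 - ν' ^ 2| ≤ s := by
        have := abs_le.mpr ⟨h1, h2⟩
        rwa [abs_div, abs_of_pos hs, div_le_one hs] at this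
      have hsq : (1 - ν' ^ 2) ^ 2 ≤ s ^ 2 := by
        calc (1 - ν' ^ 2) ^ 2 = |1 - ν' ^ 2| ^ 2 := (sq_abs _).symm
          _ ≤ s ^ 2 := by nlinarith [abs_nonneg (1 - ν' ^ 2)]
      rw [hs2] at hsq
      have hx32 : ν' ^ 2 ≤ 3 / 2 := by nlinarith
      exact (Real.le_sqrt hν.le (by norm_num)).mpr hx32
    · intro h
      have hx32 : ν' ^ 2 ≤ 3 / 2 := (Real.le_sqrt hν.le (by norm_num)).mp h
      have hshalf : (1 : ℝ) / 2 ≤ s := by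
        rw [hsdef]
        rw [show (1:ℝ)/2 = Real.sqrt ((1:ℝ)/4) by
          rw [show (1:ℝ)/4 = (1/2)^2 by norm_num, Real.sqrt_sq (by norm_num)]]
        exact Real.sqrt_le_sqrt (by linarith)
      have habs : |(1 - ν' ^ 2) / s| ≤ 1 := by
        rw [abs_div, abs_of_pos hs, div_le_one hs, abs_le]
        constructor
        · linarith
        · rcases le_or_gt (1 - ν' ^ 2) 0 with h0 | h0
          · linarith
          · have hsq : (1 - ν' ^ 2) ^ 2 ≤ s ^ 2 := by nlinarith
            nlinarith
      obtain ⟨hl, hr'⟩ := abs_le.mp habs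
      refine ⟨Real.arccos ((1 - ν' ^ 2) / s) / ν, ?_⟩
      rw [mul_div_cancel₀ _ hνne, Real.cos_arccos hl hr']
  refine ⟨?_, ?_, ?_⟩
  · constructor
    · rintro ⟨τ, hτ⟩
      exact hbound.mp ⟨τ, (hkey τ).mp hτ⟩
    · intro h
      obtain ⟨τ, hτ⟩ := hbound.mpr h
      exact ⟨τ, (hkey τ).mpr hτ⟩
  · intro τ hτ
    rw [hc] at hτ
    exact (hkey τ).mpr hτ
  · simp only [hc]
    exact hbound
end

section
/- Define MTA(x) = 2r₀·√(1 + ν̃²√(4 - 2ν̃²)/(cosh(σx) - √(1 - ν̃²/2))) for r₀ > 0, 0 < ν̃ < √2, σ > 0. Then MTA is an even function of x, strictly decreasing on (0, ∞), tends to 2r₀ as x → ±∞, and its maximum value is MTA(0) = 2r₀·(1 + √(4 - 2ν̃²)), i.e. MTA(0)/(2r₀) = 1 + √(4 - 2ν̃²). -/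
lemma cosh_tendsto_aux {l : Filter ℝ} {g : ℝ → ℝ}
    (h : Filter.Tendsto g l Filter.atTop) :
    Filter.Tendsto (fun x => Real.cosh (g x)) l Filter.atTop := by
  apply Filter.tendsto_atTop_mono (f := fun x => Real.exp (g x) / 2)
  · intro x
    rw [Real.cosh_eq]
    have := Real.exp_pos (-(g x))
    linarith
  · exact (Real.tendsto_exp_atTop.comp h).atTop_div_const two_pos


theorem stmt_14 (r₀ ν' σ : ℝ) (hr : 0 < r₀) (hν : 0 < ν') (hν2 : ν' < Real.sqrt 2)
    (hσ : 0 < σ) (MTA : ℝ → ℝ)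
    (hMTA : ∀ x, MTA x = 2 * r₀ * Real.sqrt (1 +
      ν' ^ 2 * Real.sqrt (4 - 2 * ν' ^ 2) /
        (Real.cosh (σ * x) - Real.sqrt (1 - ν' ^ 2 / 2)))) :
    (∀ x, MTA (-x) = MTA x) ∧
    StrictAntiOn MTA (Set.Ioi 0) ∧
    Filter.Tendsto MTA Filter.atTop (nhds (2 * r₀)) ∧
    Filter.Tendsto MTA Filter.atBot (nhds (2 * r₀)) ∧
    MTA 0 = 2 * r₀ * (1 + Real.sqrt (4 - 2 * ν' ^ 2)) := by
  have hν2' : ν' ^ 2 < 2 := by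
    nlinarith [Real.sq_sqrt (show (0:ℝ) ≤ 2 by norm_num), Real.sqrt_nonneg 2]
  set s := Real.sqrt (4 - 2 * ν' ^ 2) with hs
  have hs0 : 0 < s := Real.sqrt_pos.mpr (by linarith)
  have hssq : s ^ 2 = 4 - 2 * ν' ^ 2 := Real.sq_sqrt (by linarith)
  have hs2 : s < 2 := by
    nlinarith
  have hc : Real.sqrt (1 - ν' ^ 2 / 2) = s / 2 := by
    rw [show 1 - ν' ^ 2 / 2 = (s / 2) ^ 2 by rw [div_pow, hssq]; ring]
    exact Real.sqrt_sq (by positivity)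
  have ha : 0 < ν' ^ 2 * s := mul_pos (pow_pos hν 2) hs0
  have hden : ∀ x : ℝ, 0 < Real.cosh (σ * x) - s / 2 := by
    intro x
    have := Real.one_le_cosh (σ * x)
    linarith
  -- evenness
  have heven : ∀ x, MTA (-x) = MTA x := by
    intro x
    rw [hMTA, hMTA, mul_neg, Real.cosh_neg]
  refine ⟨heven, ?_, ?_, ?_, ?_⟩
  · -- strict anti
    intro x hx y hy hxy
    rw [hMTA, hMTA, hc]
    have hcosh : Real.cosh (σ * x) < Real.cosh (σ * y) := by
      rw [Real.cosh_lt_cosh]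
      rw [abs_of_pos (mul_pos hσ hx), abs_of_pos (mul_pos hσ hy)]
      exact mul_lt_mul_of_pos_left hxy hσ
    have hfrac : ν' ^ 2 * s / (Real.cosh (σ * y) - s / 2) <
        ν' ^ 2 * s / (Real.cosh (σ * x) - s / 2) :=
      div_lt_div_of_pos_left ha (hden x) (by linarith)
    have h1 : (0:ℝ) ≤ 1 + ν' ^ 2 * s / (Real.cosh (σ * y) - s / 2) := by
      have := div_nonneg ha.le (hden y).le
      linarith
    have hlt := Real.sqrt_lt_sqrt h1
      (show 1 + ν' ^ 2 * s / (Real.cosh (σ * y) - s / 2) < 1 + ν' ^ 2 * s / (Real.cosh (σ * x) - s / 2) by linarith)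
    exact mul_lt_mul_of_pos_left hlt (by linarith)
  · -- atTop
    have hcosh : Filter.Tendsto (fun x => Real.cosh (σ * x)) Filter.atTop Filter.atTop :=
      cosh_tendsto_aux (Filter.tendsto_id.const_mul_atTop hσ)
    have hd : Filter.Tendsto (fun x => Real.cosh (σ * x) - s / 2) Filter.atTop Filter.atTop :=
      Filter.tendsto_atTop_add_const_right _ _ hcosh
    have hfr : Filter.Tendsto (fun x => ν' ^ 2 * s / (Real.cosh (σ * x) - s / 2))
        Filter.atTop (nhds 0) := Filter.Tendsto.div_atTop tendsto_const_nhds hd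
    have h1 : Filter.Tendsto (fun x => 1 + ν' ^ 2 * s / (Real.cosh (σ * x) - s / 2))
        Filter.atTop (nhds 1) := by
      have := hfr.const_add 1
      simpa using this
    have h2 := (Real.continuous_sqrt.tendsto 1).comp h1
    have h3 := h2.const_mul (2 * r₀)
    simp only [Function.comp, Real.sqrt_one, mul_one] at h3
    apply h3.congr
    intro x
    rw [hMTA, hc]
  · -- atBot
    have hcosh : Filter.Tendsto (fun x => Real.cosh (σ * x)) Filter.atBot Filter.atTop := by
      have hg : Filter.Tendsto (fun x : ℝ => -(σ * x)) Filter.atBot Filter.atTop := by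
        apply Filter.tendsto_neg_atBot_atTop.comp
        exact Filter.tendsto_id.const_mul_atBot hσ
      have := cosh_tendsto_aux hg
      simpa [Real.cosh_neg] using this
    have hd : Filter.Tendsto (fun x => Real.cosh (σ * x) - s / 2) Filter.atBot Filter.atTop :=
      Filter.tendsto_atTop_add_const_right _ _ hcosh
    have hfr : Filter.Tendsto (fun x => ν' ^ 2 * s / (Real.cosh (σ * x) - s / 2))
        Filter.atBot (nhds 0) := Filter.Tendsto.div_atTop tendsto_const_nhds hd
    have h1 : Filter.Tendsto (fun x => 1 + ν' ^ 2 * s / (Real.cosh (σ * x) - s / 2))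
        Filter.atBot (nhds 1) := by
      have := hfr.const_add 1
      simpa using this
    have h2 := (Real.continuous_sqrt.tendsto 1).comp h1
    have h3 := h2.const_mul (2 * r₀)
    simp only [Function.comp, Real.sqrt_one, mul_one] at h3
    apply h3.congr
    intro x
    rw [hMTA, hc]
  · -- value at 0
    rw [hMTA, hc, mul_zero, Real.cosh_zero]
    have hne : (1 : ℝ) - s / 2 ≠ 0 := by
      intro h; linarith [h.symm.le]
    have h5 : ν' ^ 2 * s / (1 - s / 2) = s ^ 2 + 2 * s := by
      rw [div_eq_iff hne]; nlinarith
    have : 1 + ν' ^ 2 * s / (1 - s / 2) = (1 + s) ^ 2 := by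
      rw [h5]; ring
    rw [this, Real.sqrt_sq (by linarith)]
end

section
/- In normalized variables (β = γ = r₀ = 1), the function F at ξ = 0 is F(t) = ν̃²/(1 - √(1 - ν̃²/2)cos(νt)) - 1, and F satisfies the conservation law (1/2)(dF/dt)² + V(F) = (1/4)(3 - 2ν̃²), where V(F) = (ν̃² - 2)F + (1/2)(ν̃² - 3)F² + (1/4)F⁴. -/
theorem stmt_18 (ν' : ℝ) (hν : 0 < ν') (hν2 : ν' < Real.sqrt 2)
    (F V : ℝ → ℝ)
    (hF : ∀ t, F t = ν' ^ 2 / (1 - Real.sqrt (1 - ν' ^ 2 / 2) * Real.cos (ν' * t)) - 1)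
    (hV : ∀ x, V x = (ν' ^ 2 - 2) * x + (1 / 2) * (ν' ^ 2 - 3) * x ^ 2 + (1 / 4) * x ^ 4) :
    ∀ t, (1 / 2) * (deriv F t) ^ 2 + V (F t) = (1 / 4) * (3 - 2 * ν' ^ 2) := by
  have hν2' : ν' ^ 2 < 2 := by
    have h2 : (0:ℝ) ≤ 2 := by norm_num
    nlinarith [Real.sq_sqrt h2, Real.sqrt_nonneg 2]
  set s : ℝ := Real.sqrt (1 - ν' ^ 2 / 2) with hs
  have hpos : (0:ℝ) < 1 - ν' ^ 2 / 2 := by linarith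
  have hs2 : s ^ 2 = 1 - ν' ^ 2 / 2 := Real.sq_sqrt hpos.le
  have hs0 : 0 ≤ s := Real.sqrt_nonneg _
  have hs1 : s < 1 := by nlinarith [hs2, sq_nonneg (s - 1)]
  intro t
  set c : ℝ := Real.cos (ν' * t) with hc
  have hcle : |c| ≤ 1 := Real.abs_cos_le_one _
  have hd : 0 < 1 - s * c := by
    have : s * c ≤ s * 1 := by
      have := abs_le.mp hcle
      nlinarith
    nlinarith
  have hdne : 1 - s * c ≠ 0 := ne_of_gt hd
  -- derivative
  have hder : HasDerivAt F (-(ν' ^ 2 * (s * (Real.sin (ν' * t) * ν'))) / (1 - s * c) ^ 2) t := by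
    have h1 : HasDerivAt (fun u : ℝ => Real.cos (ν' * u)) (-Real.sin (ν' * t) * ν') t := by
      have := (Real.hasDerivAt_cos (ν' * t)).comp t ((hasDerivAt_id t).const_mul ν')
      simpa [mul_comm, Function.comp_def] using this
    have h2 : HasDerivAt (fun u : ℝ => 1 - s * Real.cos (ν' * u)) (s * (Real.sin (ν' * t) * ν')) t := by
      have := ((h1.const_mul s).const_sub 1)
      rw [show s * (Real.sin (ν' * t) * ν') = -(s * (-Real.sin (ν' * t) * ν')) by ring]
      exact this
    have h3 : HasDerivAt (fun u : ℝ => ν' ^ 2 / (1 - s * Real.cos (ν' * u)) - 1)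
        ((0 * (1 - s * c) - ν' ^ 2 * (s * (Real.sin (ν' * t) * ν'))) / (1 - s * c) ^ 2) t := by
      exact ((hasDerivAt_const t (ν' ^ 2)).div h2 hdne).sub_const 1
    have hFe : F = fun u : ℝ => ν' ^ 2 / (1 - s * Real.cos (ν' * u)) - 1 := funext hF
    rw [hFe]
    convert h3 using 1
    ring
  set sn : ℝ := Real.sin (ν' * t) with hsn
  have hE : s ^ 2 * sn ^ 2 = (1 - ν' ^ 2 / 2) - (s * c) ^ 2 := by
    have hP : sn ^ 2 + c ^ 2 = 1 := Real.sin_sq_add_cos_sq (ν' * t)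
    linear_combination s ^ 2 * hP + hs2
  rw [hder.deriv, hF t, hV, ← hc]
  have expand : (-(ν' ^ 2 * (s * (sn * ν'))) / (1 - s * c) ^ 2) ^ 2
      = ν' ^ 6 * (s ^ 2 * sn ^ 2) / ((1 - s * c) ^ 2) ^ 2 := by
    field_simp
  rw [expand, hE]
  field_simp
  ring
end

section
/- Let V(G) = (1/2)ν̃²G² - G³ + (1/4)G⁴ and E(G) = (1/2)(G')² + V(G). If G(t) = P/(Q - cos(ν̃t)) with P = ν̃²Q, Q² = 2/(2 - ν̃²) (the SFB displaced amplitude at the extreme position with β = γ = r₀ = 1 and φ = 0), then E(G(t)) = 0 for all t where G is defined. -/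
/-!
Writing `D = Q - cos (ν t)`, so that `G = P / D` with `G' = -P ν sin (ν t) / D²`, the identity
`sin² = 1 - (Q - D)²` turns `(G')²` into a polynomial in `G`; the two relations `P = ν² Q` and
`Q² (2 - ν²) = 2` are exactly what makes that polynomial equal to `-2 V(G)`. Since `Q² > 1`, the
denominator never vanishes.
-/

open Real

noncomputable def sfbPotential (ν x : ℝ) : ℝ := 1 / 2 * ν ^ 2 * x ^ 2 - x ^ 3 + 1 / 4 * x ^ 4

lemma one_lt_sq_of_sq_eq_two_div {ν Q : ℝ} (hν₀ : 0 < ν ^ 2) (hν₂ : ν ^ 2 < 2)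
    (hQ : Q ^ 2 = 2 / (2 - ν ^ 2)) : 1 < Q ^ 2 := by
  rw [hQ, one_lt_div (by linarith)]
  linarith

lemma sub_cos_ne_zero_of_one_lt_sq {Q : ℝ} (hQ : 1 < Q ^ 2) (x : ℝ) : Q - cos x ≠ 0 := by
  intro h
  have hcos : cos x ^ 2 ≤ 1 := cos_sq_le_one x
  rw [sub_eq_zero.mp h] at hQ
  linarith

lemma hasDerivAt_div_sub_cos (P Q ω t : ℝ) (hD : Q - cos (ω * t) ≠ 0) :
    HasDerivAt (fun t => P / (Q - cos (ω * t)))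
      (-(P * (ω * sin (ω * t))) / (Q - cos (ω * t)) ^ 2) t := by
  have hcos : HasDerivAt (fun t => Q - cos (ω * t)) (ω * sin (ω * t)) t := by
    simpa [mul_comm] using ((hasDerivAt_mul_const ω).cos).const_sub Q
  simpa [Pi.div_def] using (hasDerivAt_const t P).div hcos hD

lemma sfb_energy_eq_zero {ν Q : ℝ} (hQ : Q ^ 2 * (2 - ν ^ 2) = 2) {x : ℝ}
    (hD : Q - cos x ≠ 0) :
    1 / 2 * (-(ν ^ 2 * Q * (ν * sin x)) / (Q - cos x) ^ 2) ^ 2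
      + sfbPotential ν (ν ^ 2 * Q / (Q - cos x)) = 0 := by
  have hsin : sin x ^ 2 = 1 - cos x ^ 2 := sin_sq x
  unfold sfbPotential
  field_simp
  linear_combination (4 * ν ^ 6 * Q ^ 2) * hsin - (2 * ν ^ 6 * Q ^ 2) * hQ

theorem stmt_19 (ν' : ℝ) (hν : 0 < ν') (hν2 : ν' < Real.sqrt 2)
    (P Q : ℝ) (hQ : Q ^ 2 = 2 / (2 - ν' ^ 2)) (hP : P = ν' ^ 2 * Q)
    (G V : ℝ → ℝ)
    (hG : ∀ t, G t = P / (Q - Real.cos (ν' * t)))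
    (hV : ∀ x, V x = (1 / 2) * ν' ^ 2 * x ^ 2 - x ^ 3 + (1 / 4) * x ^ 4) :
    ∀ t, (1 / 2) * (deriv G t) ^ 2 + V (G t) = 0 := by
  intro t
  have hν₂ : ν' ^ 2 < 2 := (lt_sqrt hν.le).mp hν2
  have hQ₁ : 1 < Q ^ 2 := one_lt_sq_of_sq_eq_two_div (by positivity) hν₂ hQ
  have hQ' : Q ^ 2 * (2 - ν' ^ 2) = 2 := by
    rw [hQ, div_mul_cancel₀ _ (by linarith)]
  have hD := sub_cos_ne_zero_of_one_lt_sq hQ₁ (ν' * t)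
  rw [show G = _ from funext hG, (hasDerivAt_div_sub_cos P Q ν' t hD).deriv, hV, hP]
  exact sfb_energy_eq_zero hQ' hD
end
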